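/- Let n ∈ ℕ, let J₁, J₂, J₃ be linearly independent 4×4 complex matrices satisfying [J₁,J₂] = J₃, [J₂,J₃] = J₁, [J₃,J₁] = J₂, let V : ℝ → ℂ be differentiable, and let f_a^k : ℝ → ℂ (a = 1,2,3; k = 0,…,n) be differentiable. For m ∈ ℂ set Q(x,m) = Σ_{k=0}^{n} Σ_{a=1}^{3} f_a^k(x) J_a m^{n−k}. Then the symmetry condition ∂Q/∂x (x,m) = V(x)[J₃, Q(x,m)] + m[J₂, Q(x,m)] holds for all x ∈ ℝ and all m ∈ ℂ if and only if: f₁⁰ = 0, f₃⁰ = 0; for each k = 0,…,n−1: (f₁^k)' = −V·f₂^k + f₃^{k+1}, (f₂^k)' = V·f₁^k, (f₃^k)' = −f₁^{k+1}; and (f₁^n)' = −V·f₂^n, (f₂^n)' = V·f₁^n, (f₃^n)' = 0 identically on ℝ. -/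

import Mathlib

/-!
Since `Q(x,m) = A J₁ + B J₂ + C J₃` with `A, B, C` polynomials in `m` whose coefficients are
`f₁ᵏ(x), f₂ᵏ(x), f₃ᵏ(x)`, the commutation relations give
`V[J₃,Q] + m[J₂,Q] = (-V B + m C) J₁ + V A J₂ - m A J₃`. By linear independence of the `J_a`
the symmetry condition is the system `A' = -V B + m C`, `B' = V A`, `C' = -m A` of identities
between polynomials in `m`, and comparing the coefficients of `m^{n-k}`, `k = -1, …, n`,
yields the determining equations.
-/

open Matrix Finset

section DescSum

variable {R : Type*} [CommRing R]

def descSum (n : ℕ) (u : ℕ → R) (m : R) : R := ∑ k ∈ range (n + 1), u k * m ^ (n - k)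

open Polynomial

noncomputable def descPoly (n : ℕ) (u : ℕ → R) : R[X] := ∑ k ∈ range (n + 1), C (u (n - k)) * X ^ k

lemma eval_descPoly (n : ℕ) (u : ℕ → R) (m : R) : (descPoly n u).eval m = descSum n u m := by
  rw [descSum, ← sum_range_reflect, descPoly, eval_finsetSum]
  refine sum_congr rfl fun k hk => ?_
  rw [Nat.add_sub_cancel, Nat.sub_sub_self (Nat.le_of_lt_succ (mem_range.mp hk))]
  simp

lemma coeff_descPoly (n : ℕ) (u : ℕ → R) (j : ℕ) :
    (descPoly n u).coeff j = if j < n + 1 then u (n - j) else 0 := by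
  simp [descPoly, finsetSum_coeff]

lemma descPoly_eq_X_mul_iff {n : ℕ} {u v : ℕ → R} :
    descPoly n u = X * descPoly n v ↔ v 0 = 0 ∧ (∀ k < n, u k = v (k + 1)) ∧ u n = 0 := by
  constructor
  · intro h
    have hc (j : ℕ) := congrArg (coeff · j) h
    refine ⟨?_, fun k hk => ?_, ?_⟩
    · simpa [coeff_descPoly, coeff_X_mul] using (hc (n + 1)).symm
    · have := hc (n - (k + 1) + 1)
      rwa [coeff_X_mul, coeff_descPoly, coeff_descPoly, if_pos (by omega), if_pos (by omega),
        show n - (n - (k + 1) + 1) = k by omega, show n - (n - (k + 1)) = k + 1 by omega] at this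
    · simpa [coeff_descPoly] using hc 0
  · rintro ⟨hv0, hmid, hun⟩
    ext (_ | j)
    · simp [coeff_descPoly, hun]
    · rw [coeff_X_mul, coeff_descPoly, coeff_descPoly]
      rcases lt_trichotomy j n with hj | rfl | hj
      · rw [if_pos (by omega), if_pos (by omega), hmid _ (by omega),
          show n - (j + 1) + 1 = n - j by omega]
      · simp [hv0]
      · rw [if_neg (by omega), if_neg (by omega)]

lemma forall_descSum_eq_mul_descSum_iff [IsDomain R] [Infinite R] {n : ℕ} {u v : ℕ → R} :
    (∀ m, descSum n u m = m * descSum n v m) ↔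
      v 0 = 0 ∧ (∀ k < n, u k = v (k + 1)) ∧ u n = 0 := by
  rw [← descPoly_eq_X_mul_iff]
  refine ⟨fun h => Polynomial.funext fun m => ?_, fun h m => ?_⟩
  · simp [eval_descPoly, h]
  · simpa [eval_descPoly] using congrArg (eval m) h

lemma forall_descSum_eq_const_mul_add_mul_descSum_iff [IsDomain R] [Infinite R] {n : ℕ}
    {u w v : ℕ → R} (a : R) : (∀ m, descSum n u m = a * descSum n w m + m * descSum n v m) ↔
      v 0 = 0 ∧ (∀ k < n, u k = a * w k + v (k + 1)) ∧ u n = a * w n := by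
  have hsub (m : R) : descSum n u m - a * descSum n w m = descSum n (fun k => u k - a * w k) m := by
    simp only [descSum, mul_sum, ← sum_sub_distrib, sub_mul, mul_assoc]
  simp only [← sub_eq_iff_eq_add', hsub, forall_descSum_eq_mul_descSum_iff, sub_eq_zero]

lemma forall_descSum_eq_const_mul_descSum_iff [IsDomain R] [Infinite R] {n : ℕ} {u w : ℕ → R}
    (a : R) : (∀ m, descSum n u m = a * descSum n w m) ↔
      (∀ k < n, u k = a * w k) ∧ u n = a * w n := by
  simpa [descSum] using
    forall_descSum_eq_const_mul_add_mul_descSum_iff (u := u) (w := w) (v := 0) a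

lemma descSum_neg (n : ℕ) (u : ℕ → R) (m : R) :
    descSum n (fun k => -u k) m = -descSum n u m := by
  simp [descSum, neg_mul]

end DescSum

lemma LinearIndependent.smul_add_smul_add_smul_eq_iff {R M : Type*} [Semiring R]
    [AddCommMonoid M] [Module R M] {x y z : M} (h : LinearIndependent R ![x, y, z])
    {a b c a' b' c' : R} :
    a • x + b • y + c • z = a' • x + b' • y + c' • z ↔ a = a' ∧ b = b' ∧ c = c' := by
  refine ⟨fun e => ?_, by rintro ⟨rfl, rfl, rfl⟩; rfl⟩
  have := Fintype.linearIndependent_iffₛ.mp h ![a, b, c] ![a', b', c']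
    (by simpa [Fin.sum_univ_three] using e)
  exact ⟨this 0, this 1, this 2⟩

section Bracket

variable {K A : Type*} [CommRing K] [Ring A] [Algebra K A] {J1 J2 J3 : A}

lemma smul_commutator_add_smul_commutator (h12 : J1 * J2 - J2 * J1 = J3)
    (h23 : J2 * J3 - J3 * J2 = J1) (h31 : J3 * J1 - J1 * J3 = J2) (v m a b c : K) :
    v • (J3 * (a • J1 + b • J2 + c • J3) - (a • J1 + b • J2 + c • J3) * J3)
      + m • (J2 * (a • J1 + b • J2 + c • J3) - (a • J1 + b • J2 + c • J3) * J2)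
      = (-v * b + m * c) • J1 + (v * a) • J2 + (m * -a) • J3 := by
  have e21 : J2 * J1 = J1 * J2 - J3 := by rw [← h12]; abel
  have e32 : J3 * J2 = J2 * J3 - J1 := by rw [← h23]; abel
  have e13 : J1 * J3 = J3 * J1 - J2 := by rw [← h31]; abel
  simp only [mul_add, add_mul, mul_smul_comm, smul_mul_assoc, e21, e32, e13]
  module

end Bracket

section Derivatives

variable {𝕜 𝔸 : Type*} [NontriviallyNormedField 𝕜] [NormedCommRing 𝔸] [NormedAlgebra 𝕜 𝔸]
  {x : 𝕜}

lemma hasDerivAt_descSum {n : ℕ} {u : ℕ → 𝕜 → 𝔸} {u' : ℕ → 𝔸}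
    (h : ∀ k ≤ n, HasDerivAt (u k) (u' k) x) (m : 𝔸) :
    HasDerivAt (fun y => descSum n (u · y) m) (descSum n u' m) x :=
  HasDerivAt.fun_sum fun k hk => (h k (Nat.le_of_lt_succ (mem_range.mp hk))).mul_const _

variable {ι κ : Type*}

lemma hasDerivAt_smul_add_smul_add_smul_apply {a b c : 𝕜 → 𝔸} {a' b' c' : 𝔸}
    (ha : HasDerivAt a a' x) (hb : HasDerivAt b b' x) (hc : HasDerivAt c c' x)
    (J1 J2 J3 : Matrix ι κ 𝔸) (i : ι) (j : κ) :
    HasDerivAt (fun y => (a y • J1 + b y • J2 + c y • J3) i j)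
      ((a' • J1 + b' • J2 + c' • J3) i j) x := by
  simp only [Matrix.add_apply, Matrix.smul_apply, smul_eq_mul]
  exact ((ha.mul_const _).add (hb.mul_const _)).add (hc.mul_const _)

lemma forall_hasDerivAt_apply_iff {F : 𝕜 → Matrix ι κ 𝔸} {F' G : Matrix ι κ 𝔸}
    (hF : ∀ i j, HasDerivAt (fun y => F y i j) (F' i j) x) :
    (∀ i j, HasDerivAt (fun y => F y i j) (G i j) x) ↔ F' = G :=
  ⟨fun h => Matrix.ext fun i j => (hF i j).unique (h i j), fun h => h ▸ hF⟩

end Derivatives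

theorem determining_equations_general_degree_iff_general
    (n : ℕ)
    (J1 J2 J3 : Matrix (Fin 4) (Fin 4) ℂ)
    (hind : LinearIndependent ℂ ![J1, J2, J3])
    (h12 : J1 * J2 - J2 * J1 = J3)
    (h23 : J2 * J3 - J3 * J2 = J1)
    (h31 : J3 * J1 - J1 * J3 = J2)
    (V : ℝ → ℂ)
    (f1 f2 f3 : ℕ → ℝ → ℂ)
    (hf1 : ∀ k ≤ n, Differentiable ℝ (f1 k))
    (hf2 : ∀ k ≤ n, Differentiable ℝ (f2 k))
    (hf3 : ∀ k ≤ n, Differentiable ℝ (f3 k))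
    (Q : ℝ → ℂ → Matrix (Fin 4) (Fin 4) ℂ)
    (hQ : ∀ x m, Q x m = ∑ k ∈ Finset.range (n + 1),
        ((f1 k x * m ^ (n - k)) • J1 + (f2 k x * m ^ (n - k)) • J2
          + (f3 k x * m ^ (n - k)) • J3)) :
    (∀ (x : ℝ) (m : ℂ) (i j : Fin 4),
        HasDerivAt (fun y => Q y m i j)
          ((V x • (J3 * Q x m - Q x m * J3) + m • (J2 * Q x m - Q x m * J2)) i j) x)
      ↔ ((∀ x, f1 0 x = 0) ∧ (∀ x, f3 0 x = 0)
        ∧ (∀ k < n, ∀ x,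
            deriv (f1 k) x = -V x * f2 k x + f3 (k + 1) x)
        ∧ (∀ k < n, ∀ x, deriv (f2 k) x = V x * f1 k x)
        ∧ (∀ k < n, ∀ x, deriv (f3 k) x = -f1 (k + 1) x)
        ∧ (∀ x, deriv (f1 n) x = -V x * f2 n x)
        ∧ (∀ x, deriv (f2 n) x = V x * f1 n x)
        ∧ (∀ x, deriv (f3 n) x = 0)) := by
  have hQ_coords (y : ℝ) (m : ℂ) : Q y m = descSum n (f1 · y) m • J1
      + descSum n (f2 · y) m • J2 + descSum n (f3 · y) m • J3 := by
    simp only [hQ, descSum, sum_add_distrib, sum_smul]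
  have hQ_deriv (x : ℝ) (m : ℂ) := hasDerivAt_smul_add_smul_add_smul_apply
    (hasDerivAt_descSum (fun k hk => (hf1 k hk x).hasDerivAt) m)
    (hasDerivAt_descSum (fun k hk => (hf2 k hk x).hasDerivAt) m)
    (hasDerivAt_descSum (fun k hk => (hf3 k hk x).hasDerivAt) m) J1 J2 J3
  simp only [hQ_coords, smul_commutator_add_smul_commutator h12 h23 h31]
  simp only [forall_hasDerivAt_apply_iff (hQ_deriv _ _), hind.smul_add_smul_add_smul_eq_iff,
    ← descSum_neg, forall_and, forall_descSum_eq_const_mul_add_mul_descSum_iff,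
    forall_descSum_eq_const_mul_descSum_iff, forall_descSum_eq_mul_descSum_iff, neg_eq_zero]
  simp only [forall_comm (α := ℝ)]
  tauto

/-- For the symmetry ansatz `Q(x,m) = Σ_{k=0}^{n} Σ_{a=1}^{3} f_a^k(x) J_a m^{n-k}` of
arbitrary degree `n` in the mass `m`, the symmetry condition
`∂Q/∂x = V[J₃,Q] + m[J₂,Q]` holds for all `x ∈ ℝ`, `m ∈ ℂ` iff the general system of
determining equations holds identically on `ℝ`. -/
theorem determining_equations_general_degree_iff
    (n : ℕ)
    (J1 J2 J3 : Matrix (Fin 4) (Fin 4) ℂ)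
    (hind : LinearIndependent ℂ ![J1, J2, J3])
    (h12 : J1 * J2 - J2 * J1 = J3)
    (h23 : J2 * J3 - J3 * J2 = J1)
    (h31 : J3 * J1 - J1 * J3 = J2)
    (V : ℝ → ℂ) (hV : Differentiable ℝ V)
    (f1 f2 f3 : ℕ → ℝ → ℂ)
    (hf1 : ∀ k ≤ n, Differentiable ℝ (f1 k))
    (hf2 : ∀ k ≤ n, Differentiable ℝ (f2 k))
    (hf3 : ∀ k ≤ n, Differentiable ℝ (f3 k))
    (Q : ℝ → ℂ → Matrix (Fin 4) (Fin 4) ℂ)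
    (hQ : ∀ x m, Q x m = ∑ k ∈ Finset.range (n + 1),
        ((f1 k x * m ^ (n - k)) • J1 + (f2 k x * m ^ (n - k)) • J2
          + (f3 k x * m ^ (n - k)) • J3)) :
    (∀ (x : ℝ) (m : ℂ) (i j : Fin 4),
        HasDerivAt (fun y => Q y m i j)
          ((V x • (J3 * Q x m - Q x m * J3) + m • (J2 * Q x m - Q x m * J2)) i j) x)
      ↔ ((∀ x, f1 0 x = 0) ∧ (∀ x, f3 0 x = 0)
        ∧ (∀ k < n, ∀ x,
            deriv (f1 k) x = -V x * f2 k x + f3 (k + 1) x)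
        ∧ (∀ k < n, ∀ x, deriv (f2 k) x = V x * f1 k x)
        ∧ (∀ k < n, ∀ x, deriv (f3 k) x = -f1 (k + 1) x)
        ∧ (∀ x, deriv (f1 n) x = -V x * f2 n x)
        ∧ (∀ x, deriv (f2 n) x = V x * f1 n x)
        ∧ (∀ x, deriv (f3 n) x = 0)) :=
  determining_equations_general_degree_iff_general n J1 J2 J3 hind h12 h23 h31 V f1 f2 f3 hf1 hf2
    hf3 Q hQ
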